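/- arXiv:2106.11206 — 4 statements merged into one kernel-verified Lean document; each statement's English description precedes it below -/
import Mathlib

section
/- For all a, r ∈ ℕ and all l ∈ ℕ with 1 ≤ l ≤ n, one has Σ_{i=0}^{l} (−1)^i C(l,i) Σ_{j=0}^{n−l+1} (−1)^{n−l+1+j} C(n−l+1,j) · (a+r+j, r+i+j)‾ = 0 in ℂ^{Λ_{2,n}}. Equivalently, for every α = (α₁,α₂) ∈ Λ_{2,n}: Σ_{i=0}^{l} Σ_{j=0}^{n−l+1} (−1)^{n−l+1+i+j} C(l,i) C(n−l+1,j) C(a+r+j, α₁) C(r+i+j, α₂) = 0. -/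
/-!
Coordinatewise the sum is a mixed finite difference `Δᵢ^l Δⱼ^m` (with `m = n - l + 1`) of
`(i, j) ↦ C(a+r+j, α₁) C(r+i+j, α₂)`, a polynomial of total degree `α₁ + α₂ ≤ n < l + m`.
Since `Δ C(x, d) = C(x, d - 1)`, the `l`-th difference in `i` at `0` is `C(a+r+j, α₁) C(r+j, α₂ - l)`
(or `0` if `α₂ < l`), a polynomial in `j` of degree `< m`, which the `m`-th difference in `j` kills.
-/
open Finset

/-- `Λ_{2,n}`: pairs `α ∈ ℕ²` with `1 ≤ α₁ + α₂ ≤ n`. -/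
def Lam2 (n : ℕ) : Finset (ℕ × ℕ) :=
  ((range (n+1)) ×ˢ (range (n+1))).filter (fun α => 1 ≤ α.1 + α.2 ∧ α.1 + α.2 ≤ n)

/-- `v̄ ∈ ℂ^{Λ_{2,n}}`, with `α`-coordinate `C(v₁,α₁)·C(v₂,α₂)`. -/
noncomputable def vbar (n : ℕ) (v : ℕ × ℕ) : (Lam2 n) → ℂ :=
  fun α => ((v.1.choose α.1.1 * v.2.choose α.1.2 : ℕ) : ℂ)

/-- `Λ_{3,n}`: triples `β ∈ ℕ³` with `1 ≤ β₁ + β₂ + β₃ ≤ n`. -/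
def Lam3 (n : ℕ) : Finset (ℕ × ℕ × ℕ) :=
  ((range (n+1)) ×ˢ (range (n+1)) ×ˢ (range (n+1))).filter
    (fun β => 1 ≤ β.1 + β.2.1 + β.2.2 ∧ β.1 + β.2.1 + β.2.2 ≤ n)

/-- The linear map `A_n : ℕ³ → ℕ²` with matrix rows `(1,1,n)` and `(0,1,n+1)`. -/
def Amap (n : ℕ) (β : ℕ × ℕ × ℕ) : ℕ × ℕ :=
  (β.1 + β.2.1 + n * β.2.2, β.2.1 + (n+1) * β.2.2)

/-- `c_β = Σ_{γ ≤ β} (−1)^{|β−γ|} C(β,γ) (A_nγ)‾`. -/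
noncomputable def cvec (n : ℕ) (β : ℕ × ℕ × ℕ) : (Lam2 n) → ℂ :=
  ∑ γ ∈ (range (β.1+1)) ×ˢ (range (β.2.1+1)) ×ˢ (range (β.2.2+1)),
    (((-1 : ℂ) ^ ((β.1 + β.2.1 + β.2.2) - (γ.1 + γ.2.1 + γ.2.2))) *
      ((β.1.choose γ.1 * β.2.1.choose γ.2.1 * β.2.2.choose γ.2.2 : ℕ) : ℂ)) •
      vbar n (Amap n γ)

/-- `J ∈ S_{A_n}`: `J ⊆ Λ_{3,n}`, `|J| = λ_{2,n}`, `det L^c_J ≠ 0`. -/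
def memSA (n : ℕ) (J : Finset (ℕ × ℕ × ℕ)) : Prop :=
  J ⊆ Lam3 n ∧ J.card = (Lam2 n).card ∧
    ∀ e : (Lam2 n) ≃ J,
      (Matrix.of fun i j : (Lam2 n) => cvec n (e i).1 j).det ≠ 0

/-- `m_J = Σ_{β ∈ J} A_nβ`. -/
def mJ (n : ℕ) (J : Finset (ℕ × ℕ × ℕ)) : ℕ × ℕ := ∑ β ∈ J, Amap n β

/-- `f_k(v) = k·v₁ + (1−k)·v₂`. -/
def fk (k : ℕ) (v : ℕ × ℕ) : ℤ := (k : ℤ) * v.1 + (1 - (k : ℤ)) * v.2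

/-- Data of a sequence `η = (z, d₀, d₁, …, d_r)`. -/
structure OmegaData where
  r : ℕ
  z : Bool
  d : ℕ → ℕ

/-- `η ∈ Ω`: `d₀ = 0`, `d_i ≥ 1` for `1 ≤ i ≤ r` (and `d_i = 0` beyond `r`),
and `d₀ + ⋯ + d_r = n`. -/
def OmegaData.IsOmega (n : ℕ) (η : OmegaData) : Prop :=
  η.d 0 = 0 ∧ (∀ i, 1 ≤ i → i ≤ η.r → 1 ≤ η.d i) ∧
  (∀ i, η.r < i → η.d i = 0) ∧
  (∑ i ∈ range (η.r + 1), η.d i) = n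

/-- The unique `t` with `Σ_{i=0}^{t−1} d_i < j ≤ Σ_{i=0}^{t} d_i`. -/
noncomputable def tIdx (η : OmegaData) (j : ℕ) : ℕ :=
  sInf {t | j ≤ ∑ i ∈ range (t+1), η.d i}

/-- The vector `v_{j,η} ∈ ℕ²`. -/
noncomputable def vvec (η : OmegaData) (j : ℕ) : ℕ × ℕ :=
  let t := tIdx η j
  let c := j - ∑ i ∈ range t, η.d i
  let a := (∑ i ∈ range t, if (Odd i ↔ Odd t) then η.d i else 0) + c
  if (η.z = true) ↔ Odd t then (a, 0) else (0, a)

/-- `T_{j,η}` for `1 ≤ j ≤ n`, and `T_{0,η} = {(1,1),…,(n,n)}`. -/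
noncomputable def Tj (n : ℕ) (η : OmegaData) (j : ℕ) : Finset (ℕ × ℕ) :=
  if j = 0 then (range n).image (fun q => (q+1, q+1))
  else (range (n - j + 1)).image (fun p => vvec η j + (p, p))

/-- `T_η = ⋃_{j=0}^{n} T_{j,η}`. -/
noncomputable def Tset (n : ℕ) (η : OmegaData) : Finset (ℕ × ℕ) :=
  (range (n+1)).biUnion (fun j => Tj n η j)

/-- `r_{i,η} = n·π₂(v_{i,η})`. -/
noncomputable def rshift (n : ℕ) (η : OmegaData) (i : ℕ) : ℕ := n * (vvec η i).2

/-- `T'_η = T_{0,η} ∪ ⋃_{i=1}^{n} (T_{i,η} + r_{i,η})`. -/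
noncomputable def Tset' (n : ℕ) (η : OmegaData) : Finset (ℕ × ℕ) :=
  Tj n η 0 ∪ (Finset.Icc 1 n).biUnion
    (fun i => (Tj n η i).image (fun v => v + (rshift n η i, rshift n η i)))

/-- `J_η`: the (unique) subset of `Λ_{3,n}` with `A_n(J_η) = T'_η`. -/
noncomputable def Jset (n : ℕ) (η : OmegaData) : Finset (ℕ × ℕ × ℕ) :=
  (Lam3 n).filter (fun β => Amap n β ∈ Tset' n η)

/-- `z_k = 1` iff `f_k((1,0)) ≤ f_k((n,n+1))`. -/
def zk (n k : ℕ) : Bool := decide (fk k (1, 0) ≤ fk k (n, n+1))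

/-- `t_l` in the recursive definition of `η_k`, where `O`, `E` are the odd- and
even-indexed partial sums `Σ_{j<l, j odd} d_{k,j}` and `Σ_{j<l, j even} d_{k,j}`. -/
noncomputable def tval (n k : ℕ) (l O E : ℕ) : ℕ :=
  let w := (if Odd l then E else O) + 1
  if ((zk n k = true) ↔ Odd l) then
    sSup {m : ℕ | (m : ℤ) * fk k (1, 0) ≤ fk k (w * n, w * (n+1))}
  else
    sSup {m : ℕ | (m : ℤ) * fk k (n, n+1) ≤ fk k (w, 0)}

/-- The pair `(Σ_{j≤l, j odd} d_{k,j}, Σ_{j≤l, j even} d_{k,j})` of the recursion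
defining `η_k`. -/
noncomputable def oeSums (n k : ℕ) : ℕ → ℕ × ℕ
  | 0 => (0, 0)
  | l + 1 =>
    let p := oeSums n k l
    let O := p.1
    let E := p.2
    let S := O + E
    let dnext := if S < n then
        min (n - S) (tval n k (l+1) O E - (if Odd (l+1) then O else E))
      else 0
    if Odd (l+1) then (O + dnext, E) else (O, E + dnext)

/-- `d_{k,l}`. -/
noncomputable def dk (n k : ℕ) : ℕ → ℕ
  | 0 => 0
  | l + 1 =>
    let p := oeSums n k l
    let O := p.1
    let E := p.2
    let S := O + E
    if S < n then
      min (n - S) (tval n k (l+1) O E - (if Odd (l+1) then O else E))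
    else 0

/-- `η_k = (z_k, d_{k,0}, …, d_{k,r})`, where `r` is the first index with
`Σ_{j=0}^{r} d_{k,j} = n`. -/
noncomputable def etak (n k : ℕ) : OmegaData :=
  { r := sInf {r | ∑ j ∈ range (r+1), dk n k j = n},
    z := zk n k,
    d := dk n k }

open Polynomial fwdDiff

theorem sum_range_neg_one_pow_mul_choose_mul {R : Type*} [CommRing R] (f : ℕ → R) (m : ℕ) :
    ∑ k ∈ range (m + 1), (-1 : R) ^ k * m.choose k * f k = (-1) ^ m * Δ_[1] ^[m] f 0 := by
  rw [fwdDiff_iter_eq_sum_shift, mul_sum]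
  refine sum_congr rfl fun k hk ↦ ?_
  obtain ⟨t, rfl⟩ := Nat.exists_eq_add_of_le (Nat.le_of_lt_succ (mem_range.1 hk))
  simp only [zsmul_eq_mul, zero_add, smul_eq_mul, mul_one, Nat.add_sub_cancel_left]
  push_cast
  have hsq : (-1 : R) ^ t * (-1) ^ t = 1 := by rw [← mul_pow, neg_one_mul, neg_neg, one_pow]
  rw [pow_add]
  linear_combination (-(-1) ^ k * ((k + t).choose k : R) * f k) * hsq

theorem fwdDiff_iter_choose_eq_zero_of_lt {d l : ℕ} (h : d < l) :
    Δ_[1] ^[l] (fun x ↦ x.choose d : ℕ → ℤ) = 0 := by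
  obtain ⟨t, rfl⟩ := Nat.exists_eq_add_of_lt h
  have hd : Δ_[1] ^[d] (fun x ↦ x.choose d : ℕ → ℤ) = fun _ ↦ 1 := by
    simpa using fwdDiff_iter_choose 0 d
  rw [show d + t + 1 = t + 1 + d by ring, Function.iterate_add_apply, hd,
    Function.iterate_succ_apply, fwdDiff_const]
  exact Function.iterate_fixed (fwdDiff_const 1 0) t

theorem sum_range_neg_one_pow_mul_choose_mul_choose_add (l d y : ℕ) :
    ∑ i ∈ range (l + 1), (-1 : ℤ) ^ i * l.choose i * (y + i).choose d =
      (-1) ^ l * if l ≤ d then (y.choose (d - l) : ℤ) else 0 := by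
  rw [sum_range_neg_one_pow_mul_choose_mul (fun i ↦ ((y + i).choose d : ℤ))]
  congr 1
  have hshift := fwdDiff_iter_comp_add 1 (fun x ↦ (x.choose d : ℤ)) y l 0
  simp only [zero_add] at hshift
  simp_rw [add_comm y, hshift]
  split_ifs with hl
  · obtain ⟨e, rfl⟩ := Nat.exists_eq_add_of_le hl
    rw [fwdDiff_iter_choose, Nat.add_sub_cancel_left]
  · rw [fwdDiff_iter_choose_eq_zero_of_lt (not_le.1 hl), Pi.zero_apply]

theorem fwdDiff_iter_eq_zero_of_eq_eval {R : Type*} [CommRing R] {f : ℕ → R} {P : R[X]}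
    {m : ℕ} (hf : ∀ j : ℕ, f j = P.eval (j : R)) (hP : P.natDegree < m) :
    Δ_[1] ^[m] f = 0 := by
  funext y
  have h := congrFun (Polynomial.fwdDiff_iter_eq_zero_of_degree_lt hP) (y : R)
  rw [fwdDiff_iter_eq_sum_shift] at h ⊢
  simpa [hf] using h

theorem exists_natDegree_le_eval_eq_choose_add (K : Type*) [Field K] [CharZero K] (x c : ℕ) :
    ∃ P : K[X], P.natDegree ≤ c ∧ ∀ j : ℕ, P.eval (j : K) = (x + j).choose c := by
  refine ⟨C (c.factorial : K)⁻¹ * (descPochhammer K c).comp (X + C (x : K)), ?_, fun j ↦ ?_⟩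
  · refine (natDegree_C_mul_le _ _).trans ?_
    rw [natDegree_comp, natDegree_X_add_C, descPochhammer_natDegree, mul_one]
  · rw [Nat.cast_choose_eq_descPochhammer_div]
    simp [div_eq_inv_mul, add_comm]

theorem sum_range_sum_range_neg_one_pow_mul_choose_eq_zero {K : Type*} [Field K] [CharZero K]
    {c d l m : ℕ} (x y : ℕ) (h : c + d < l + m) :
    ∑ i ∈ range (l + 1), ∑ j ∈ range (m + 1), (-1 : K) ^ (m + i + j) * (l.choose i : K) *
      (m.choose j : K) * ((x + j).choose c : K) * ((y + i + j).choose d : K) = 0 := by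
  have hinner : ∀ j, ∑ i ∈ range (l + 1), (-1 : K) ^ i * l.choose i * (y + j + i).choose d =
      (-1) ^ l * if l ≤ d then ((y + j).choose (d - l) : K) else 0 := fun j ↦ by
    exact_mod_cast sum_range_neg_one_pow_mul_choose_mul_choose_add l d (y + j)
  have hsplit : ∀ j, ∑ i ∈ range (l + 1), (-1 : K) ^ (m + i + j) * (l.choose i : K) *
      (m.choose j : K) * ((x + j).choose c : K) * ((y + i + j).choose d : K) =
      (-1) ^ (m + j) * m.choose j * (x + j).choose c *
        ∑ i ∈ range (l + 1), (-1 : K) ^ i * l.choose i * (y + j + i).choose d := fun j ↦ by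
    rw [mul_sum]
    refine sum_congr rfl fun i _ ↦ ?_
    rw [show y + i + j = y + j + i by ring, show m + i + j = m + j + i by ring, pow_add]
    ring
  rw [sum_comm]
  simp_rw [hsplit, hinner]
  split_ifs with hld
  · obtain ⟨P, hP, hPeval⟩ := exists_natDegree_le_eval_eq_choose_add K x c
    obtain ⟨Q, hQ, hQeval⟩ := exists_natDegree_le_eval_eq_choose_add K y (d - l)
    have hdiff : Δ_[1] ^[m] (fun j ↦ ((x + j).choose c * (y + j).choose (d - l) : K)) = 0 :=
      fwdDiff_iter_eq_zero_of_eq_eval (P := P * Q) (fun j ↦ by rw [eval_mul, hPeval, hQeval])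
        ((natDegree_mul_le.trans (add_le_add hP hQ)).trans_lt (by omega))
    calc _ = (-1) ^ (m + l) * ∑ j ∈ range (m + 1), (-1 : K) ^ j * m.choose j *
          ((x + j).choose c * (y + j).choose (d - l)) := by
          rw [mul_sum]
          refine sum_congr rfl fun j _ ↦ ?_
          rw [pow_add, pow_add]
          ring
      _ = 0 := by rw [sum_range_neg_one_pow_mul_choose_mul, hdiff, Pi.zero_apply, mul_zero, mul_zero]
  · simp

theorem stmt13_general (n : ℕ) (a r l : ℕ) :
    (∑ i ∈ range (l+1), ((-1 : ℂ) ^ i * (l.choose i : ℂ)) •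
      ∑ j ∈ range (n-l+2), ((-1 : ℂ) ^ (n-l+1+j) * ((n-l+1).choose j : ℂ)) •
        vbar n (a+r+j, r+i+j)) = 0 ∧
    ∀ α ∈ Lam2 n,
      (∑ i ∈ range (l+1), ∑ j ∈ range (n-l+2),
        (-1 : ℂ) ^ (n-l+1+i+j) * (l.choose i : ℂ) * ((n-l+1).choose j : ℂ) *
          ((a+r+j).choose α.1 : ℂ) * ((r+i+j).choose α.2 : ℂ)) = 0 := by
  have hcoord (α : ℕ × ℕ) (hα : α ∈ Lam2 n) :=
    sum_range_sum_range_neg_one_pow_mul_choose_eq_zero (K := ℂ) (m := n - l + 1) (a + r) r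
      (show α.1 + α.2 < l + (n - l + 1) by have := (mem_filter.1 hα).2.2; omega)
  refine ⟨funext fun α ↦ ?_, hcoord⟩
  simp only [Finset.sum_apply, Pi.smul_apply, smul_eq_mul, vbar, Nat.cast_mul, mul_sum, Pi.zero_apply]
  rw [← hcoord α.1 α.2]
  refine sum_congr rfl fun i _ ↦ sum_congr rfl fun j _ ↦ ?_
  rw [show n-l+1+i+j = i + (n-l+1+j) by ring, pow_add]
  ring

theorem stmt13 (n : ℕ) (hn : 1 ≤ n) (a r l : ℕ) (hl1 : 1 ≤ l) (hln : l ≤ n) :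
    (∑ i ∈ range (l+1), ((-1 : ℂ) ^ i * (l.choose i : ℂ)) •
      ∑ j ∈ range (n-l+2), ((-1 : ℂ) ^ (n-l+1+j) * ((n-l+1).choose j : ℂ)) •
        vbar n (a+r+j, r+i+j)) = 0 ∧
    ∀ α ∈ Lam2 n,
      (∑ i ∈ range (l+1), ∑ j ∈ range (n-l+2),
        (-1 : ℂ) ^ (n-l+1+i+j) * (l.choose i : ℂ) * ((n-l+1).choose j : ℂ) *
          ((a+r+j).choose α.1 : ℂ) * ((r+i+j).choose α.2 : ℂ)) = 0 :=
  stmt13_general n a r l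
end

section
/- For all a, r ∈ ℕ and all l ∈ ℕ with 1 ≤ l ≤ n, one has Σ_{i=0}^{l} (−1)^i C(l,i) Σ_{j=0}^{n−l+1} (−1)^{n−l+1+j} C(n−l+1,j) · (r+i+j, a+r+j)‾ = 0 in ℂ^{Λ_{2,n}}. -/
open Finset

section AuxStmt14
open Polynomial

lemma abel_step (L : ℕ) (f : ℕ → ℂ) :
    ∑ i ∈ range (L+1+1), (-1:ℂ)^i * ((L+1).choose i : ℂ) * f i
      = ∑ i ∈ range (L+1), (-1:ℂ)^i * (L.choose i : ℂ) * (f i - f (i+1)) := by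
  have e1 : ∀ i : ℕ, (-1:ℂ)^(i+1) * (((L+1).choose (i+1) : ℕ) : ℂ) * f (i+1)
      = (-1:ℂ)^(i+1) * (L.choose i : ℂ) * f (i+1)
        + (-1:ℂ)^(i+1) * (L.choose (i+1) : ℂ) * f (i+1) := by
    intro i
    rw [Nat.choose_succ_succ]
    push_cast
    ring
  rw [Finset.sum_range_succ' (fun i => (-1:ℂ)^i * ((L+1).choose i : ℂ) * f i) (L+1)]
  simp only [e1]
  rw [Finset.sum_add_distrib]
  have e2 : (∑ i ∈ range (L+1), (-1:ℂ)^(i+1) * (L.choose (i+1) : ℂ) * f (i+1))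
      + (-1:ℂ)^0 * (((L+1).choose 0 : ℕ) : ℂ) * f 0
      = ∑ i ∈ range (L+1), (-1:ℂ)^i * (L.choose i : ℂ) * f i := by
    have := (Finset.sum_range_succ' (fun i => (-1:ℂ)^i * ((L).choose i : ℂ) * f i) (L+1)).symm
    simp only [Nat.choose_zero_right] at this ⊢
    rw [this, Finset.sum_range_succ]
    simp [Nat.choose_succ_self]
  rw [add_assoc]
  simp only [Nat.choose_zero_right] at e2 ⊢
  rw [e2, ← Finset.sum_add_distrib]
  apply Finset.sum_congr rfl
  intro i _
  ring

lemma key1 : ∀ l p x : ℕ,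
    ∑ i ∈ range (l+1), (-1:ℂ)^i * (l.choose i : ℂ) * (((x+i).choose p : ℕ) : ℂ)
      = (-1:ℂ)^l * (if l ≤ p then ((x.choose (p-l) : ℕ) : ℂ) else 0) := by
  intro l
  induction l with
  | zero => intro p x; simp
  | succ L ih =>
    intro p x
    rw [abel_step L (fun i => (((x+i).choose p : ℕ) : ℂ))]
    cases p with
    | zero =>
      simp
    | succ p' =>
      have hstep : ∀ i : ℕ, ((((x+i).choose (p'+1) : ℕ)) : ℂ) - (((x+(i+1)).choose (p'+1) : ℕ) : ℂ)
          = -(((x+i).choose p' : ℕ) : ℂ) := by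
        intro i
        have h : (x+(i+1)).choose (p'+1) = (x+i).choose p' + (x+i).choose (p'+1) := by
          rw [show x+(i+1) = (x+i)+1 from rfl, Nat.choose_succ_succ]
        rw [h]
        push_cast
        ring
      simp only [hstep]
      have : ∑ i ∈ range (L+1), (-1:ℂ)^i * (L.choose i : ℂ) * -(((x+i).choose p' : ℕ) : ℂ)
          = -∑ i ∈ range (L+1), (-1:ℂ)^i * (L.choose i : ℂ) * (((x+i).choose p' : ℕ) : ℂ) := by
        rw [← Finset.sum_neg_distrib]
        exact Finset.sum_congr rfl (fun i _ => by ring)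
      rw [this, ih p' x]
      by_cases h : L ≤ p'
      · rw [if_pos h, if_pos (Nat.succ_le_succ h), Nat.succ_sub_succ]
        ring
      · rw [if_neg h, if_neg (fun hh => h (Nat.le_of_succ_le_succ hh))]
        ring

lemma altkill : ∀ (M : ℕ) (P : Polynomial ℂ), P.degree < (M : ℕ) →
    ∑ j ∈ range (M+1), (-1:ℂ)^j * (M.choose j : ℂ) * P.eval (j : ℂ) = 0 := by
  intro M
  induction M with
  | zero =>
    intro P hP
    have : P = 0 := by
      rw [← Polynomial.degree_eq_bot]
      simpa using hP
    simp [this]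
  | succ M ih =>
    intro P hP
    rw [abel_step M (fun j => P.eval (j : ℂ))]
    set Q : Polynomial ℂ := P.comp (X + C 1) - P with hQdef
    have heval : ∀ j : ℕ, P.eval ((j:ℂ)) - P.eval ((j+1 : ℕ) : ℂ) = -(Q.eval (j:ℂ)) := by
      intro j
      simp only [hQdef, eval_sub, eval_comp, eval_add, eval_X, eval_C]
      push_cast
      ring
    have hQ : Q.degree < (M : ℕ) := by
      by_cases hP0 : P = 0
      · simp only [hQdef, hP0, zero_comp, sub_zero, degree_zero]
        rw [Nat.cast_withBot]
        exact WithBot.bot_lt_coe M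
      · have hPle : P.degree ≤ (M : ℕ) := by
          have h1 : P.natDegree < M + 1 := (natDegree_lt_iff_degree_lt hP0).mpr hP
          exact le_trans degree_le_natDegree (by exact_mod_cast Nat.lt_succ_iff.mp h1)
        have hne : P.comp (X + C (1:ℂ)) ≠ 0 := comp_X_add_C_ne_zero_iff.mpr hP0
        have hcomp : (P.comp (X + C 1)).degree = P.degree := by
          rw [degree_eq_natDegree hne, degree_eq_natDegree hP0, natDegree_comp,
            natDegree_X_add_C, mul_one]
        have hlc : (P.comp (X + C 1)).leadingCoeff = P.leadingCoeff := by
          rw [leadingCoeff_comp (by rw [natDegree_X_add_C]; exact one_ne_zero),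
            leadingCoeff_X_add_C, one_pow, mul_one]
        have := degree_sub_lt hcomp hne hlc
        calc Q.degree < (P.comp (X + C 1)).degree := this
          _ = P.degree := hcomp
          _ ≤ (M : ℕ) := hPle
    have : ∀ j ∈ range (M+1), (-1:ℂ)^j * (M.choose j : ℂ) *
        (P.eval ((j:ℂ)) - P.eval ((j+1:ℕ):ℂ))
        = -((-1:ℂ)^j * (M.choose j : ℂ) * Q.eval (j:ℂ)) := by
      intro j _
      rw [heval j]; ring
    rw [Finset.sum_congr rfl this, Finset.sum_neg_distrib, ih Q hQ, neg_zero]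

lemma key2 (M p' q r a : ℕ) (h : p' + q < M) :
    ∑ j ∈ range (M+1), (-1:ℂ)^j * (M.choose j : ℂ) *
      (((r+j).choose p' : ℕ) : ℂ) * (((a+r+j).choose q : ℕ) : ℂ) = 0 := by
  set P : Polynomial ℂ :=
    (descPochhammer ℂ p').comp (X + C (r:ℂ)) *
      (descPochhammer ℂ q).comp (X + C ((a+r : ℕ) : ℂ)) with hPdef
  have hm1 := (monic_descPochhammer ℂ p').comp_X_add_C (r:ℂ)
  have hm2 := (monic_descPochhammer ℂ q).comp_X_add_C ((a+r:ℕ):ℂ)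
  have hmon : P.Monic := hm1.mul hm2
  have hdeg : P.degree < (M : ℕ) := by
    have hnd : P.natDegree = p' + q := by
      rw [hPdef, hm1.natDegree_mul hm2, natDegree_comp, natDegree_comp,
        descPochhammer_natDegree, descPochhammer_natDegree,
        natDegree_X_add_C, natDegree_X_add_C, mul_one, mul_one]
    rw [degree_eq_natDegree hmon.ne_zero, hnd]
    exact_mod_cast h
  have heval : ∀ j : ℕ, P.eval (j:ℂ)
      = ((p'.factorial : ℕ) : ℂ) * (((r+j).choose p' : ℕ) : ℂ) *
        (((q.factorial : ℕ) : ℂ) * (((a+r+j).choose q : ℕ) : ℂ)) := by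
    intro j
    rw [hPdef, eval_mul, eval_comp, eval_comp]
    simp only [eval_add, eval_X, eval_C]
    rw [show (j:ℂ) + (r:ℂ) = ((r+j : ℕ) : ℂ) by push_cast; ring,
        show (j:ℂ) + ((a+r:ℕ):ℂ) = ((a+r+j : ℕ):ℂ) by push_cast; ring,
        descPochhammer_eval_eq_descFactorial, descPochhammer_eval_eq_descFactorial,
        Nat.descFactorial_eq_factorial_mul_choose, Nat.descFactorial_eq_factorial_mul_choose]
    push_cast
    ring
  have h0 := altkill M P hdeg
  have hK : ((p'.factorial : ℂ) * (q.factorial : ℂ)) ≠ 0 :=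
    mul_ne_zero (Nat.cast_ne_zero.mpr p'.factorial_ne_zero)
      (Nat.cast_ne_zero.mpr q.factorial_ne_zero)
  have hmain : (∑ j ∈ range (M+1), (-1:ℂ)^j * (M.choose j : ℂ) *
      (((r+j).choose p' : ℕ) : ℂ) * (((a+r+j).choose q : ℕ) : ℂ)) *
      ((p'.factorial : ℂ) * (q.factorial : ℂ)) = 0 := by
    rw [Finset.sum_mul, ← h0]
    apply Finset.sum_congr rfl
    intro j _
    rw [heval j]
    ring
  exact (mul_eq_zero.mp hmain).resolve_right hK

end AuxStmt14

theorem stmt14 (n : ℕ) (hn : 1 ≤ n) (a r l : ℕ) (hl1 : 1 ≤ l) (hln : l ≤ n) :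
    (∑ i ∈ range (l+1), ((-1 : ℂ) ^ i * (l.choose i : ℂ)) •
      ∑ j ∈ range (n-l+2), ((-1 : ℂ) ^ (n-l+1+j) * ((n-l+1).choose j : ℂ)) •
        vbar n (r+i+j, a+r+j)) = 0 := by
  funext α
  obtain ⟨⟨p, q⟩, hα⟩ := α
  have hpq : p + q ≤ n := by
    simp only [Lam2, Finset.mem_filter] at hα
    exact hα.2.2
  simp only [Finset.sum_apply, Pi.smul_apply, Pi.zero_apply, smul_eq_mul, vbar]
  push_cast
  set M := n - l + 1 with hM
  rw [show n - l + 2 = M + 1 from by omega]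
  have step1 : (∑ i ∈ range (l+1), (-1:ℂ)^i * (l.choose i : ℂ) *
        ∑ j ∈ range (M+1), (-1:ℂ)^(M+j) * (M.choose j : ℂ) *
          ((((r+i+j).choose p : ℕ) : ℂ) * (((a+r+j).choose q : ℕ) : ℂ)))
      = ∑ j ∈ range (M+1),
          ((-1:ℂ)^(M+j) * (M.choose j : ℂ) * (((a+r+j).choose q : ℕ) : ℂ)) *
            ∑ i ∈ range (l+1), (-1:ℂ)^i * (l.choose i : ℂ) * ((((r+j)+i).choose p : ℕ) : ℂ) := by
    rw [Finset.sum_congr rfl (fun i _ => Finset.mul_sum (range (M+1)) _ _), Finset.sum_comm]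
    apply Finset.sum_congr rfl
    intro j _
    rw [Finset.mul_sum]
    apply Finset.sum_congr rfl
    intro i _
    rw [show r+i+j = (r+j)+i from by omega]
    ring
  rw [step1]
  have step2 : ∀ j ∈ range (M+1),
      ((-1:ℂ)^(M+j) * (M.choose j : ℂ) * (((a+r+j).choose q : ℕ) : ℂ)) *
          (∑ i ∈ range (l+1), (-1:ℂ)^i * (l.choose i : ℂ) * ((((r+j)+i).choose p : ℕ) : ℂ))
        = ((-1:ℂ)^(M+j) * (M.choose j : ℂ) * (((a+r+j).choose q : ℕ) : ℂ)) *
          ((-1:ℂ)^l * (if l ≤ p then (((r+j).choose (p-l) : ℕ) : ℂ) else 0)) := by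
    intro j _
    rw [key1 l p (r+j)]
  rw [Finset.sum_congr rfl step2]
  by_cases hlp : l ≤ p
  · simp only [if_pos hlp]
    have hlt : (p - l) + q < M := by omega
    have h2 := key2 M (p-l) q r a hlt
    calc ∑ j ∈ range (M+1),
          ((-1:ℂ)^(M+j) * (M.choose j : ℂ) * (((a+r+j).choose q : ℕ) : ℂ)) *
            ((-1:ℂ)^l * (((r+j).choose (p-l) : ℕ) : ℂ))
        = (-1:ℂ)^(M+l) * ∑ j ∈ range (M+1), (-1:ℂ)^j * (M.choose j : ℂ) *
            (((r+j).choose (p-l) : ℕ) : ℂ) * (((a+r+j).choose q : ℕ) : ℂ) := by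
          rw [Finset.mul_sum]
          apply Finset.sum_congr rfl
          intro j _
          rw [pow_add, pow_add]
          ring
      _ = 0 := by rw [h2, mul_zero]
  · simp only [if_neg hlp, mul_zero, Finset.sum_const_zero]
end

section
/- Let β, β′ ∈ Λ_{3,n} with β ≠ β′. Then A_nβ ≠ A_nβ′; that is, the map β ↦ A_nβ is injective on Λ_{3,n}. -/
open Finset

theorem stmt15 (n : ℕ) (hn : 1 ≤ n) :
    Set.InjOn (Amap n) ↑(Lam3 n) := by
  intro a ha b hb hab
  simp only [Finset.coe_filter, Lam3, Set.mem_setOf_eq, Finset.mem_product,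
    Finset.mem_range] at ha hb
  have h2a : a.2.1 < n + 1 := by omega
  have h2b : b.2.1 < n + 1 := by omega
  have h1 : a.1 + a.2.1 + n * a.2.2 = b.1 + b.2.1 + n * b.2.2 :=
    congrArg Prod.fst hab
  have h2 : a.2.1 + (n+1) * a.2.2 = b.2.1 + (n+1) * b.2.2 :=
    congrArg Prod.snd hab
  have hma : (a.2.1 + (n+1) * a.2.2) % (n+1) = a.2.1 := by
    rw [Nat.add_mul_mod_self_left, Nat.mod_eq_of_lt h2a]
  have hmb : (b.2.1 + (n+1) * b.2.2) % (n+1) = b.2.1 := by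
    rw [Nat.add_mul_mod_self_left, Nat.mod_eq_of_lt h2b]
  have e2 : a.2.1 = b.2.1 := by rw [← hma, ← hmb, h2]
  have e3 : a.2.2 = b.2.2 := by
    have : (n+1) * a.2.2 = (n+1) * b.2.2 := by omega
    exact Nat.eq_of_mul_eq_mul_left (by omega) this
  have e1 : a.1 = b.1 := by
    rw [e2, e3] at h1; omega
  exact Prod.ext e1 (Prod.ext e2 e3)
end

section
/- For every k ∈ {1,…,n}, the recursion defining η_k terminates and every term d_{k,l} with l ≥ 1 satisfies d_{k,l} > 0; in particular η_k ∈ Ω. -/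
open Finset

private lemma sSup_mul_le_eq (d c : ℕ) (hc : 0 < c) :
    sSup {m : ℕ | (m : ℤ) * c ≤ (d : ℤ)} = d / c := by
  have h : {m : ℕ | (m : ℤ) * c ≤ (d : ℤ)} = Set.Iic (d / c) := by
    ext m
    simp only [Set.mem_setOf_eq, Set.mem_Iic]
    rw [Nat.le_div_iff_mul_le hc]
    exact_mod_cast Iff.rfl
  rw [h, csSup_Iic]

def uu (n k : ℕ) : ℕ := if zk n k then n+1-k else k
def vv (n k : ℕ) : ℕ := if zk n k then k else n+1-k

lemma fk10 (k : ℕ) : fk k (1, 0) = (k : ℤ) := by simp [fk]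

lemma fk_nn (n k : ℕ) (hk : k ≤ n) : fk k (n, n+1) = ((n+1-k : ℕ) : ℤ) := by
  have h : ((n + 1 - k : ℕ) : ℤ) = (n:ℤ) + 1 - k := by omega
  simp only [fk]; push_cast [h]; ring

lemma fk_w (n k w : ℕ) (hk : k ≤ n) : fk k (w*n, w*(n+1)) = ((w*(n+1-k) : ℕ) : ℤ) := by
  have h : ((n + 1 - k : ℕ) : ℤ) = (n:ℤ) + 1 - k := by omega
  simp only [fk]; push_cast [h]; ring

lemma fk_w0 (k w : ℕ) : fk k (w, 0) = ((w*k : ℕ) : ℤ) := by simp [fk]; ring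

lemma zk_iff (n k : ℕ) (hk : k ≤ n) : zk n k = true ↔ k ≤ n + 1 - k := by
  rw [zk, decide_eq_true_iff, fk10, fk_nn n k hk]
  exact_mod_cast Iff.rfl

lemma vv_le_uu (n k : ℕ) (hk : k ≤ n) : vv n k ≤ uu n k := by
  by_cases hz : zk n k = true
  · simp only [uu, vv, hz, if_true]
    exact (zk_iff n k hk).mp hz
  · have h2 := mt (zk_iff n k hk).mpr hz
    simp only [uu, vv, hz, Bool.false_eq_true, if_false] at *
    omega

lemma vv_pos (n k : ℕ) (hk1 : 1 ≤ k) (hk : k ≤ n) : 0 < vv n k := by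
  unfold vv; split <;> omega

lemma uu_pos (n k : ℕ) (hk1 : 1 ≤ k) (hk : k ≤ n) : 0 < uu n k :=
  lt_of_lt_of_le (vv_pos n k hk1 hk) (vv_le_uu n k hk)

lemma tval_eq (n k l O E : ℕ) (hk1 : 1 ≤ k) (hk : k ≤ n) :
    tval n k l O E =
      if Odd l then (E+1) * uu n k / vv n k else (O+1) * vv n k / uu n k := by
  have ha : 0 < k := hk1
  have hb : 0 < n + 1 - k := by omega
  by_cases hl : Odd l <;> by_cases hz : zk n k = true
  · simp only [tval, hz, hl, iff_true, if_true]
    rw [fk10, fk_w n k _ hk, sSup_mul_le_eq _ _ ha]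
    simp [uu, vv, hz]
  · simp only [tval, hz, hl, iff_true, Bool.false_eq_true, if_false, if_true]
    rw [fk_nn n k hk, fk_w0, sSup_mul_le_eq _ _ hb]
    simp [uu, vv, hz]
  · simp only [tval, hz, hl, iff_false, if_false, not_true, if_true]
    rw [fk_nn n k hk, fk_w0, sSup_mul_le_eq _ _ hb]
    simp [uu, vv, hz, hl]
  · simp only [tval, hz, hl, iff_false, Bool.false_eq_true, if_false, not_false_iff, if_true]
    rw [fk10, fk_w n k _ hk, sSup_mul_le_eq _ _ ha]
    simp [uu, vv, hz, hl]
lemma dk_succ (n k l : ℕ) : dk n k (l+1) =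
    (if (oeSums n k l).1 + (oeSums n k l).2 < n then
      min (n - ((oeSums n k l).1 + (oeSums n k l).2))
        (tval n k (l+1) (oeSums n k l).1 (oeSums n k l).2 -
          (if Odd (l+1) then (oeSums n k l).1 else (oeSums n k l).2))
    else 0) := rfl

lemma oeSums_succ (n k l : ℕ) : oeSums n k (l+1) =
    if Odd (l+1) then ((oeSums n k l).1 + dk n k (l+1), (oeSums n k l).2)
    else ((oeSums n k l).1, (oeSums n k l).2 + dk n k (l+1)) := rfl

lemma sum_dk (n k l : ℕ) :
    ∑ j ∈ range (l+1), dk n k j = (oeSums n k l).1 + (oeSums n k l).2 := by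
  induction l with
  | zero => simp [dk, oeSums]
  | succ l ih =>
    rw [Finset.sum_range_succ, ih, oeSums_succ]
    split <;> simp <;> omega

lemma inv (n k : ℕ) (hk1 : 1 ≤ k) (hkn : k ≤ n) (l : ℕ) :
    (oeSums n k l).1 + (oeSums n k l).2 ≤ n ∧
    ((oeSums n k l).1 + (oeSums n k l).2 < n →
      (if Odd (l+1) then ((oeSums n k l).1 + 1) * vv n k ≤ ((oeSums n k l).2 + 1) * uu n k
       else ((oeSums n k l).2 + 1) * uu n k ≤ ((oeSums n k l).1 + 1) * vv n k)) := by
  have hvv := vv_pos n k hk1 hkn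
  have huu := uu_pos n k hk1 hkn
  induction l with
  | zero =>
    constructor
    · simp [oeSums]
    · intro _
      simp only [oeSums]
      rw [if_pos (by norm_num : Odd (0+1))]
      simpa using vv_le_uu n k hkn
  | succ l ih =>
    by_cases hS : (oeSums n k l).1 + (oeSums n k l).2 < n
    · have hreq := ih.2 hS
      by_cases hodd : Odd (l+1)
      · rw [if_pos hodd] at hreq
        set O := (oeSums n k l).1 with hO
        set E := (oeSums n k l).2 with hE
        have htv : tval n k (l+1) O E = (E+1) * uu n k / vv n k := by
          rw [tval_eq n k (l+1) O E hk1 hkn, if_pos hodd]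
        have hd : dk n k (l+1) = min (n - (O+E)) ((E+1) * uu n k / vv n k - O) := by
          rw [dk_succ, if_pos hS, htv, if_pos hodd]
        have hT : O + 1 ≤ (E+1) * uu n k / vv n k :=
          (Nat.le_div_iff_mul_le hvv).mpr hreq
        have hpair : oeSums n k (l+1) = (O + dk n k (l+1), E) := by
          rw [oeSums_succ, if_pos hodd]
        rw [hpair]
        have hnotodd : ¬ Odd (l+1+1) := by simp [Nat.odd_add_one, hodd]
        constructor
        · simp only
          have : dk n k (l+1) ≤ n - (O+E) := by rw [hd]; exact min_le_left _ _
          omega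
        · intro h'
          simp only at h' ⊢
          rw [if_neg hnotodd]
          have hdne : dk n k (l+1) < n - (O+E) := by omega
          have hdeq : dk n k (l+1) = (E+1) * uu n k / vv n k - O := by
            rcases min_cases (n - (O+E)) ((E+1) * uu n k / vv n k - O) with ⟨h1,h2⟩|⟨h1,h2⟩
            · omega
            · omega
          have hOd : O + dk n k (l+1) = (E+1) * uu n k / vv n k := by omega
          rw [hOd]
          exact le_of_lt ((Nat.div_lt_iff_lt_mul hvv).mp (lt_add_one _))
      · rw [if_neg hodd] at hreq
        set O := (oeSums n k l).1 with hO
        set E := (oeSums n k l).2 with hE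
        have htv : tval n k (l+1) O E = (O+1) * vv n k / uu n k := by
          rw [tval_eq n k (l+1) O E hk1 hkn, if_neg hodd]
        have hd : dk n k (l+1) = min (n - (O+E)) ((O+1) * vv n k / uu n k - E) := by
          rw [dk_succ, if_pos hS, htv, if_neg hodd]
        have hT : E + 1 ≤ (O+1) * vv n k / uu n k :=
          (Nat.le_div_iff_mul_le huu).mpr hreq
        have hpair : oeSums n k (l+1) = (O, E + dk n k (l+1)) := by
          rw [oeSums_succ, if_neg hodd]
        rw [hpair]
        have hodd2 : Odd (l+1+1) := by simp [Nat.odd_add_one, hodd]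
        constructor
        · simp only
          have : dk n k (l+1) ≤ n - (O+E) := by rw [hd]; exact min_le_left _ _
          omega
        · intro h'
          simp only at h' ⊢
          rw [if_pos hodd2]
          have hdne : dk n k (l+1) < n - (O+E) := by omega
          have hdeq : dk n k (l+1) = (O+1) * vv n k / uu n k - E := by
            rcases min_cases (n - (O+E)) ((O+1) * vv n k / uu n k - E) with ⟨h1,h2⟩|⟨h1,h2⟩
            · omega
            · omega
          have hEd : E + dk n k (l+1) = (O+1) * vv n k / uu n k := by omega
          rw [hEd]
          exact le_of_lt ((Nat.div_lt_iff_lt_mul huu).mp (lt_add_one _))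
    · have hd : dk n k (l+1) = 0 := by rw [dk_succ, if_neg hS]
      have hpair : oeSums n k (l+1) = oeSums n k l := by
        rw [oeSums_succ, hd]
        split <;> simp
      rw [hpair]
      exact ⟨ih.1, fun h => absurd h hS⟩

lemma dk_pos (n k : ℕ) (hk1 : 1 ≤ k) (hkn : k ≤ n) (l : ℕ)
    (hS : (oeSums n k l).1 + (oeSums n k l).2 < n) : 1 ≤ dk n k (l+1) := by
  have hvv := vv_pos n k hk1 hkn
  have huu := uu_pos n k hk1 hkn
  have hreq := (inv n k hk1 hkn l).2 hS
  rw [dk_succ, if_pos hS, tval_eq n k (l+1) _ _ hk1 hkn]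
  by_cases hodd : Odd (l+1)
  · rw [if_pos hodd] at hreq ⊢
    rw [if_pos hodd]
    have hT := (Nat.le_div_iff_mul_le hvv).mpr hreq
    omega
  · rw [if_neg hodd] at hreq ⊢
    rw [if_neg hodd]
    have hT := (Nat.le_div_iff_mul_le huu).mpr hreq
    omega
lemma S_lb (n k : ℕ) (hk1 : 1 ≤ k) (hkn : k ≤ n) (l : ℕ) :
    min l n ≤ (oeSums n k l).1 + (oeSums n k l).2 := by
  induction l with
  | zero => simp
  | succ l ih =>
    have hstep : (oeSums n k (l+1)).1 + (oeSums n k (l+1)).2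
        = (oeSums n k l).1 + (oeSums n k l).2 + dk n k (l+1) := by
      rw [← sum_dk, ← sum_dk, Finset.sum_range_succ]
    have hle := (inv n k hk1 hkn l).1
    by_cases hS : (oeSums n k l).1 + (oeSums n k l).2 < n
    · have := dk_pos n k hk1 hkn l hS
      omega
    · have hd : dk n k (l+1) = 0 := by rw [dk_succ, if_neg hS]
      omega

lemma S_mono (n k : ℕ) (a b : ℕ) (hab : a ≤ b) :
    (oeSums n k a).1 + (oeSums n k a).2 ≤ (oeSums n k b).1 + (oeSums n k b).2 := by
  rw [← sum_dk, ← sum_dk]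
  exact Finset.sum_le_sum_of_subset (Finset.range_subset_range.mpr (by omega))

theorem stmt16 (n : ℕ) (hn : 1 ≤ n) (k : ℕ) (hk1 : 1 ≤ k) (hkn : k ≤ n) :
    (∃ r : ℕ, ∑ j ∈ range (r+1), dk n k j = n) ∧
    (∀ l : ℕ, 1 ≤ l → l ≤ sInf {r | ∑ j ∈ range (r+1), dk n k j = n} →
      0 < dk n k l) ∧
    (etak n k).IsOmega n := by
  have hex : ∑ j ∈ range (n+1), dk n k j = n := by
    rw [sum_dk]
    have h1 := S_lb n k hk1 hkn n
    have h2 := (inv n k hk1 hkn n).1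
    omega
  have hne : {r | ∑ j ∈ range (r+1), dk n k j = n}.Nonempty := ⟨n, hex⟩
  have hR : ∑ j ∈ range (sInf {r | ∑ j ∈ range (r+1), dk n k j = n} + 1), dk n k j = n :=
    Nat.sInf_mem hne
  have hpos : ∀ l : ℕ, 1 ≤ l → l ≤ sInf {r | ∑ j ∈ range (r+1), dk n k j = n} →
      0 < dk n k l := by
    intro l h1 h2
    obtain ⟨m, rfl⟩ : ∃ m, l = m + 1 := ⟨l - 1, by omega⟩
    have hS : (oeSums n k m).1 + (oeSums n k m).2 < n := by
      have hle := (inv n k hk1 hkn m).1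
      rcases lt_or_eq_of_le hle with h | h
      · exact h
      · exfalso
        have hmem : m ∈ {r | ∑ j ∈ range (r+1), dk n k j = n} := by
          simp only [Set.mem_setOf_eq, sum_dk]; exact h
        have := Nat.sInf_le hmem
        omega
    exact dk_pos n k hk1 hkn m hS
  refine ⟨⟨n, hex⟩, hpos, rfl, hpos, ?_, hR⟩
  intro i hi
  replace hi : sInf {r | ∑ j ∈ range (r+1), dk n k j = n} < i := hi
  obtain ⟨m, rfl⟩ : ∃ m, i = m + 1 := ⟨i - 1, by omega⟩
  show dk n k (m+1) = 0
  have hSm : ¬ ((oeSums n k m).1 + (oeSums n k m).2 < n) := by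
    have hRS : (oeSums n k (sInf {r | ∑ j ∈ range (r+1), dk n k j = n})).1 +
        (oeSums n k (sInf {r | ∑ j ∈ range (r+1), dk n k j = n})).2 = n := by
      rw [← sum_dk]; exact hR
    have := S_mono n k _ m (by omega : sInf {r | ∑ j ∈ range (r+1), dk n k j = n} ≤ m)
    omega
  rw [dk_succ, if_neg hSm]
end
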